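/- arXiv:1211.7191 — 4 statements merged into one kernel-verified Lean document; each statement's English description precedes it below -/
import Mathlib

section
/- Let μ be a probability measure on a measurable space E and U : E → [0,∞) a bounded measurable function, and m ≥ 1. Then the total variation distance between Ψ_{exp(-U/m)}(μ) and μ is at most sup_x (1 - exp(-U(x)/m)), which is at most (sup U)/m. Here ‖ν₁ - ν₂‖_tv := sup{|ν₁(f) - ν₂(f)| : f measurable with osc(f) ≤ 1}. -/
/-!
Write `Ψ f` for the Gibbs average `μ(f G) / μ(G)` with `G = exp (-U / m) ∈ (0, 1]`. Expanding the
right-hand side gives the identity `μ f - Ψ f = μ ((1 - G) (f - Ψ f))`. Since `Ψ f` is an average of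
the values of `f`, `|f - Ψ f| ≤ osc f ≤ 1`, so `|μ f - Ψ f| ≤ μ (1 - G) ≤ sup (1 - G)`.
Finally `1 - exp (-t) ≤ t` bounds this by `sup U / m`.
-/

open MeasureTheory

noncomputable def boltzmannGibbs {E : Type*} [MeasurableSpace E] (μ : Measure E) (G f : E → ℝ) :
    ℝ :=
  (∫ x, f x * G x ∂μ) / ∫ x, G x ∂μ

section BoltzmannGibbs

variable {E : Type*} [MeasurableSpace E] {μ : Measure E} {G f : E → ℝ}

theorem abs_boltzmannGibbs_sub_le {c r : ℝ} (hG0 : ∀ x, 0 ≤ G x) (hG : Integrable G μ)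
    (hfG : Integrable (fun x => f x * G x) μ) (hGpos : 0 < ∫ x, G x ∂μ)
    (hf : ∀ x, |f x - c| ≤ r) :
    |boltzmannGibbs μ G f - c| ≤ r := by
  have hsub : boltzmannGibbs μ G f - c = (∫ x, (f x - c) * G x ∂μ) / ∫ x, G x ∂μ := by
    simp only [sub_mul]
    rw [integral_sub hfG (hG.const_mul c), integral_const_mul, boltzmannGibbs]
    field_simp
  have hnum : |∫ x, (f x - c) * G x ∂μ| ≤ r * ∫ x, G x ∂μ := by
    rw [← integral_const_mul, ← Real.norm_eq_abs]
    refine norm_integral_le_of_norm_le (hG.const_mul r) (.of_forall fun x => ?_)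
    rw [Real.norm_eq_abs, abs_mul, abs_of_nonneg (hG0 x)]
    exact mul_le_mul_of_nonneg_right (hf x) (hG0 x)
  rw [hsub, abs_div, abs_of_pos hGpos, div_le_iff₀ hGpos]
  exact hnum

theorem integral_sub_boltzmannGibbs [IsProbabilityMeasure μ] (hf : Integrable f μ)
    (hG : Integrable G μ) (hfG : Integrable (fun x => f x * G x) μ) (hGne : ∫ x, G x ∂μ ≠ 0) :
    ∫ x, f x ∂μ - boltzmannGibbs μ G f =
      ∫ x, (1 - G x) * (f x - boltzmannGibbs μ G f) ∂μ := by
  set s := boltzmannGibbs μ G f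
  have hexpand : (fun x => (1 - G x) * (f x - s)) = fun x => f x - f x * G x - s * (1 - G x) := by
    ext x; ring
  have hs : s * ∫ x, G x ∂μ = ∫ x, f x * G x ∂μ := div_mul_cancel₀ _ hGne
  have h1G : Integrable (fun x => 1 - G x) μ := (integrable_const 1).sub hG
  have hfsub : Integrable (fun x => f x - f x * G x) μ := hf.sub hfG
  rw [hexpand, integral_sub hfsub (h1G.const_mul s), integral_sub hf hfG,
    integral_const_mul, integral_sub (integrable_const 1) hG]
  simp only [integral_const, probReal_univ, smul_eq_mul, one_mul]
  linarith

theorem abs_integral_sub_boltzmannGibbs_le [IsProbabilityMeasure μ] {r : ℝ} (hGm : Measurable G)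
    (hG0 : ∀ x, 0 ≤ G x) (hG1 : ∀ x, G x ≤ 1) (hGpos : 0 < ∫ x, G x ∂μ) (hfm : Measurable f)
    (hosc : ∀ x y, |f x - f y| ≤ r) :
    |∫ x, f x ∂μ - boltzmannGibbs μ G f| ≤ r * ⨆ x, (1 - G x) := by
  obtain ⟨x₀⟩ := nonempty_of_isProbabilityMeasure μ
  have hG : Integrable G μ :=
    .of_bound hGm.aestronglyMeasurable 1 (.of_forall fun x => by
      rw [Real.norm_eq_abs, abs_of_nonneg (hG0 x)]; exact hG1 x)
  have hfbound : ∀ x, ‖f x‖ ≤ |f x₀| + r := fun x => by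
    have := abs_sub_abs_le_abs_sub (f x) (f x₀)
    rw [Real.norm_eq_abs]; linarith [hosc x x₀]
  have hf : Integrable f μ := .of_bound hfm.aestronglyMeasurable _ (.of_forall hfbound)
  have hfG : Integrable (fun x => f x * G x) μ :=
    hG.bdd_mul hfm.aestronglyMeasurable (.of_forall hfbound)
  have hclose : ∀ x, |f x - boltzmannGibbs μ G f| ≤ r := fun x => by
    rw [abs_sub_comm]
    exact abs_boltzmannGibbs_sub_le hG0 hG hfG hGpos fun y => hosc y x
  have hr : 0 ≤ r := (abs_nonneg _).trans (hosc x₀ x₀)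
  have hbdd : BddAbove (Set.range fun x => 1 - G x) :=
    ⟨1, by rintro _ ⟨x, rfl⟩; linarith [hG0 x]⟩
  rw [integral_sub_boltzmannGibbs hf hG hfG hGpos.ne']
  have h := norm_integral_le_of_norm_le_const (μ := μ)
    (f := fun x => (1 - G x) * (f x - boltzmannGibbs μ G f)) (C := r * ⨆ x, (1 - G x))
    (.of_forall fun x => by
      rw [Real.norm_eq_abs, abs_mul, abs_of_nonneg (sub_nonneg.2 (hG1 x)), mul_comm]
      exact mul_le_mul (hclose x) (le_ciSup hbdd x) (sub_nonneg.2 (hG1 x)) hr)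
  simpa using h

end BoltzmannGibbs

theorem iSup_one_sub_exp_neg_div_le {E : Type*} [Nonempty E] {U : E → ℝ} {m : ℝ} (hm : 0 ≤ m)
    (hU : BddAbove (Set.range U)) :
    (⨆ x, (1 - Real.exp (-U x / m))) ≤ (⨆ x, U x) / m :=
  ciSup_le fun x => by
    have hle : U x / m ≤ (⨆ y, U y) / m := div_le_div_of_nonneg_right (le_ciSup hU x) hm
    rw [neg_div]
    linarith [Real.add_one_le_exp (-(U x / m))]

theorem stmt3_general {E : Type*} [MeasurableSpace E] (μ : Measure E)
    [IsProbabilityMeasure μ] (U : E → ℝ) (m : ℝ) (hm : 1 ≤ m)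
    (hU : Measurable U) (hU0 : ∀ x, 0 ≤ U x) (hUbdd : BddAbove (Set.range U)) :
    (∀ f : E → ℝ, Measurable f → (∀ x y, |f x - f y| ≤ 1) →
      |(∫ x, f x * Real.exp (-U x / m) ∂μ) / (∫ x, Real.exp (-U x / m) ∂μ) - ∫ x, f x ∂μ|
        ≤ ⨆ x, (1 - Real.exp (-U x / m))) ∧
    (⨆ x, (1 - Real.exp (-U x / m))) ≤ (⨆ x, U x) / m := by
  have := nonempty_of_isProbabilityMeasure μ
  have hm0 : 0 ≤ m := zero_le_one.trans hm
  set G : E → ℝ := fun x => Real.exp (-U x / m)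
  have hGm : Measurable G := (hU.neg.div_const m).exp
  have hG1 : ∀ x, G x ≤ 1 := fun x =>
    Real.exp_le_one_iff.2 (div_nonpos_of_nonpos_of_nonneg (neg_nonpos.2 (hU0 x)) hm0)
  have hGpos : 0 < ∫ x, G x ∂μ :=
    integral_exp_pos (.of_bound hGm.aestronglyMeasurable 1 (.of_forall fun x => by
      rw [Real.norm_of_nonneg (Real.exp_nonneg _)]; exact hG1 x))
  refine ⟨fun f hfm hosc => ?_, iSup_one_sub_exp_neg_div_le hm0 hUbdd⟩
  rw [abs_sub_comm, ← one_mul (⨆ x, (1 - G x))]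
  exact abs_integral_sub_boltzmannGibbs_le hGm (fun x => (Real.exp_pos _).le) hG1 hGpos hfm hosc

theorem stmt3 {E : Type*} [MeasurableSpace E] [Nonempty E] (μ : Measure E)
    [IsProbabilityMeasure μ] (U : E → ℝ) (m : ℝ) (hm : 1 ≤ m)
    (hU : Measurable U) (hU0 : ∀ x, 0 ≤ U x) (hUbdd : BddAbove (Set.range U)) :
    (∀ f : E → ℝ, Measurable f → (∀ x y, |f x - f y| ≤ 1) →
      |(∫ x, f x * Real.exp (-U x / m) ∂μ) / (∫ x, Real.exp (-U x / m) ∂μ) - ∫ x, f x ∂μ|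
        ≤ ⨆ x, (1 - Real.exp (-U x / m))) ∧
    (⨆ x, (1 - Real.exp (-U x / m))) ≤ (⨆ x, U x) / m :=
  stmt3_general μ U m hm hU hU0 hUbdd
end

section
/- Let μ be a probability measure on E and V : E → ℝ a bounded measurable function. Then μ(V·f) - μ(V)·μ(f) = ∫∫ (f(y) - f(x))·(V(y) - V(x))₊ μ(dx) μ(dy) for every bounded measurable f, where a₊ = max(a, 0). -/
/-!
Swapping `x` and `y` turns `(f y - f x) * (V y - V x)₊` into `-(f y - f x) * (V x - V y)₊`,
and `μ ⊗ μ` is invariant under the swap. Since `a₊ - (-a)₊ = a`, twice the double integral is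
therefore `∫∫ (f y - f x) * (V y - V x)`, which expands to twice the covariance `μ(V f) - μ(V) μ(f)`.
-/

open MeasureTheory

theorem abs_sub_le_two_mul_of_abs_le {α : Type*} {g : α → ℝ} {C : ℝ} (hC : ∀ x, |g x| ≤ C)
    (x y : α) : |g y - g x| ≤ 2 * C := by
  linarith [abs_sub (g y) (g x), hC x, hC y]

section

variable {α : Type*} [MeasurableSpace α] {μ : Measure α}

theorem integrable_of_abs_le [IsFiniteMeasure μ] {g : α → ℝ} (hg : Measurable g) {C : ℝ}
    (hC : ∀ x, |g x| ≤ C) : Integrable g μ :=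
  .of_bound hg.aestronglyMeasurable C (ae_of_all _ hC)

theorem integral_prod_sub_mul_sub [IsProbabilityMeasure μ] {f g : α → ℝ}
    (hf : Integrable f μ) (hg : Integrable g μ) (hfg : Integrable (fun x ↦ f x * g x) μ) :
    ∫ p, (f p.2 - f p.1) * (g p.2 - g p.1) ∂μ.prod μ
      = 2 * (∫ x, f x * g x ∂μ - (∫ x, f x ∂μ) * ∫ x, g x ∂μ) := by
  have expand : ∀ p : α × α, (f p.2 - f p.1) * (g p.2 - g p.1)
      = (f p.2 * g p.2 + f p.1 * g p.1) - (f p.1 * g p.2 + g p.1 * f p.2) := fun p ↦ by ring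
  have h_diag : Integrable (fun p : α × α ↦ f p.2 * g p.2 + f p.1 * g p.1) (μ.prod μ) :=
    (hfg.comp_snd μ).add (hfg.comp_fst μ)
  have h_cross : Integrable (fun p : α × α ↦ f p.1 * g p.2 + g p.1 * f p.2) (μ.prod μ) :=
    (hf.mul_prod hg).add (hg.mul_prod hf)
  simp_rw [expand]
  rw [integral_sub h_diag h_cross,
    integral_add (hfg.comp_snd μ) (hfg.comp_fst μ), integral_add (hf.mul_prod hg) (hg.mul_prod hf),
    integral_fun_snd (fun x ↦ f x * g x), integral_fun_fst (fun x ↦ f x * g x),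
    integral_prod_mul, integral_prod_mul]
  simp only [probReal_univ, one_smul]
  ring

theorem integral_prod_mul_max_zero_of_swap_eq_neg [SFinite μ] {a b : α × α → ℝ}
    (ha : ∀ p, a p.swap = -a p) (hb : ∀ p, b p.swap = -b p)
    (hab : Integrable (fun p ↦ a p * max (b p) 0) (μ.prod μ)) :
    2 * ∫ p, a p * max (b p) 0 ∂μ.prod μ = ∫ p, a p * b p ∂μ.prod μ := by
  have hsum : ∀ p, a p * max (b p) 0 + a p.swap * max (b p.swap) 0 = a p * b p := fun p ↦ by
    rw [ha, hb, neg_mul, ← sub_eq_add_neg, ← mul_sub, max_zero_sub_max_neg_zero_eq_self]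
  have hab_swap : Integrable (fun p ↦ a p.swap * max (b p.swap) 0) (μ.prod μ) := hab.swap
  calc 2 * ∫ p, a p * max (b p) 0 ∂μ.prod μ
      = (∫ p, a p * max (b p) 0 ∂μ.prod μ) + ∫ p, a p.swap * max (b p.swap) 0 ∂μ.prod μ := by
        rw [two_mul, integral_prod_swap (fun p ↦ a p * max (b p) 0)]
    _ = ∫ p, a p * b p ∂μ.prod μ := by
        rw [← integral_add hab hab_swap]
        simp_rw [hsum]

end

theorem stmt6 {E : Type*} [MeasurableSpace E] (μ : Measure E) [IsProbabilityMeasure μ]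
    (V f : E → ℝ) (hV : Measurable V) (hVb : ∃ C, ∀ x, |V x| ≤ C)
    (hf : Measurable f) (hfb : ∃ C, ∀ x, |f x| ≤ C) :
    (∫ x, V x * f x ∂μ) - (∫ x, V x ∂μ) * (∫ x, f x ∂μ)
      = ∫ x, ∫ y, (f y - f x) * max (V y - V x) 0 ∂μ ∂μ := by
  obtain ⟨CV, hCV⟩ := hVb
  obtain ⟨Cf, hCf⟩ := hfb
  have hfi : Integrable f μ := integrable_of_abs_le hf hCf
  have hVi : Integrable V μ := integrable_of_abs_le hV hCV
  have hmax_le : ∀ p : E × E, ‖max (V p.2 - V p.1) 0‖ ≤ 2 * CV := fun p ↦ by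
    rw [Real.norm_of_nonneg (le_max_right _ _)]
    exact (max_le (le_abs_self _) (abs_nonneg _)).trans (abs_sub_le_two_mul_of_abs_le hCV _ _)
  have hint : Integrable (fun p : E × E ↦ (f p.2 - f p.1) * max (V p.2 - V p.1) 0) (μ.prod μ) :=
    ((hfi.comp_snd μ).sub (hfi.comp_fst μ)).mul_bdd (by fun_prop) (ae_of_all _ hmax_le)
  have hcov := integral_prod_sub_mul_sub hfi hVi
    (hfi.mul_bdd hV.aestronglyMeasurable (ae_of_all _ hCV))
  rw [← integral_prod_mul_max_zero_of_swap_eq_neg (fun _ ↦ by simp) (fun _ ↦ by simp) hint,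
    integral_prod _ hint] at hcov
  simp_rw [mul_comm (V _)]
  linarith
end

section
/- Let μ be a probability measure on E, V : E → ℝ bounded measurable, m ≥ 1. Define S(x,dy) = e^{-U(x)/m}·δ_x(dy) + (1 - e^{-U(x)/m})·Ψ_{e^{-U/m}}(μ)(dy) for a bounded nonnegative U, and S̃(x,dy) = e^{-U(x)/m}·δ_x(dy) + (1 - e^{-U(x)/m})·μ(dy). Then sup_x ‖S(x,·) - S̃(x,·)‖_tv ≤ ‖U‖²/m², where ‖U‖ = sup_x |U(x)|. -/
open MeasureTheory

/-!
Both kernels keep the point `x` with probability `e^{-U(x)/m}`, so their difference is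
`(1 - e^{-U(x)/m}) (Ψ_G(μ)(f) - μ(f))` with `G = e^{-U/m}`, and `1 - e^{-U(x)/m} ≤ ‖U‖/m`.
The density `h = G / μ(G)` of `Ψ_G(μ)` with respect to `μ` satisfies `h ≥ G ≥ 1 - ‖U‖/m`.
For any probability density `h ≥ 1 - ε` and any `g` with values in `[0, 1]`, the pointwise bound
`g (h - 1) ≥ -ε` gives `μ(g h) - μ(g) ≥ -ε`, and applying this to `1 - g` gives the upper bound;
shifting `f` by its infimum reduces oscillation at most one to this case.
-/

section DensityPerturbation

variable {E : Type*} [MeasurableSpace E] {μ : Measure E} {h : E → ℝ} {ε : ℝ}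

lemma integrable_of_forall_mem_Icc [IsFiniteMeasure μ] {g : E → ℝ} {a b : ℝ}
    (hg : AEStronglyMeasurable g μ) (hab : ∀ y, g y ∈ Set.Icc a b) : Integrable g μ :=
  .of_bound hg (max |a| |b|) (ae_of_all _ fun y => abs_le_max_abs_abs (hab y).1 (hab y).2)

lemma integrable_mul_of_forall_mem_Icc {g : E → ℝ} {a b : ℝ} (hg : AEStronglyMeasurable g μ)
    (hab : ∀ y, g y ∈ Set.Icc a b) (hh : Integrable h μ) :
    Integrable (fun y => g y * h y) μ :=
  hh.bdd_mul hg (ae_of_all _ fun y => abs_le_max_abs_abs (hab y).1 (hab y).2)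

variable [IsProbabilityMeasure μ]

lemma neg_le_integral_mul_sub_integral {g : E → ℝ} (hg : AEStronglyMeasurable g μ)
    (hg01 : ∀ y, g y ∈ Set.Icc 0 1) (hh : Integrable h μ) (hε : 0 ≤ ε)
    (hhε : ∀ y, 1 - ε ≤ h y) :
    -ε ≤ ∫ y, g y * h y ∂μ - ∫ y, g y ∂μ := by
  have hgh := integrable_mul_of_forall_mem_Icc hg hg01 hh
  have hgi := integrable_of_forall_mem_Icc hg hg01
  rw [← integral_sub hgh hgi]
  calc -ε = ∫ _, -ε ∂μ := by simp
    _ ≤ ∫ y, g y * h y - g y ∂μ := by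
      refine integral_mono (integrable_const _) (hgh.sub hgi) fun y => ?_
      obtain ⟨hg0, hg1⟩ := hg01 y
      nlinarith [hhε y]

lemma abs_integral_mul_sub_integral_le_of_mem_Icc {g : E → ℝ} (hg : AEStronglyMeasurable g μ)
    (hg01 : ∀ y, g y ∈ Set.Icc 0 1) (hh : Integrable h μ) (hh1 : ∫ y, h y ∂μ = 1)
    (hhε : ∀ y, 1 - ε ≤ h y) :
    |∫ y, g y * h y ∂μ - ∫ y, g y ∂μ| ≤ ε := by
  have hε : 0 ≤ ε := by
    have : ∫ _, 1 - ε ∂μ ≤ ∫ y, h y ∂μ := integral_mono (integrable_const _) hh hhε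
    simp only [integral_const, probReal_univ, one_smul, hh1] at this
    linarith
  have hcompl : ∀ y, 1 - g y ∈ Set.Icc 0 1 := fun y => by
    obtain ⟨hg0, hg1⟩ := hg01 y
    constructor <;> linarith
  have hlow := neg_le_integral_mul_sub_integral hg hg01 hh hε hhε
  have hup := neg_le_integral_mul_sub_integral (g := fun y => 1 - g y)
    (aestronglyMeasurable_const.sub hg) hcompl hh hε hhε
  have hgh := integrable_mul_of_forall_mem_Icc hg hg01 hh
  have hgi := integrable_of_forall_mem_Icc hg hg01
  simp only [sub_mul, one_mul] at hup
  rw [integral_sub hh hgh, integral_sub (integrable_const _) hgi, hh1] at hup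
  simp only [integral_const, probReal_univ, one_smul] at hup
  exact abs_le.2 ⟨hlow, by linarith⟩

lemma abs_integral_mul_sub_integral_le {f : E → ℝ} (hf : AEStronglyMeasurable f μ)
    (hosc : ∀ y z, |f y - f z| ≤ 1) (hh : Integrable h μ) (hh1 : ∫ y, h y ∂μ = 1)
    (hhε : ∀ y, 1 - ε ≤ h y) :
    |∫ y, f y * h y ∂μ - ∫ y, f y ∂μ| ≤ ε := by
  set a := ⨅ y, f y
  have hshift : ∀ y, f y - a ∈ Set.Icc 0 1 := fun y => by
    have : Nonempty E := ⟨y⟩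
    have hlow : ∀ z, f y - 1 ≤ f z := fun z => by linarith [(abs_le.1 (hosc y z)).2]
    have hbdd : BddBelow (Set.range f) := ⟨f y - 1, by rintro _ ⟨z, rfl⟩; exact hlow z⟩
    exact ⟨sub_nonneg.2 (ciInf_le hbdd y), by linarith [le_ciInf hlow]⟩
  have hg : AEStronglyMeasurable (fun y => f y - a) μ := hf.sub aestronglyMeasurable_const
  have key := abs_integral_mul_sub_integral_le_of_mem_Icc hg hshift hh hh1 hhε
  have hgh := integrable_mul_of_forall_mem_Icc hg hshift hh
  have hgi := integrable_of_forall_mem_Icc hg hshift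
  have hf_eq : f = fun y => (f y - a) + a := by ext; ring
  rw [hf_eq]
  simp only [add_mul]
  rw [integral_add hgh (hh.const_mul a), integral_add hgi (integrable_const _),
    integral_const_mul, hh1]
  simpa using key

lemma abs_integral_mul_div_integral_sub_integral_le {G f : E → ℝ}
    (hG : AEStronglyMeasurable G μ) (hG01 : ∀ y, G y ∈ Set.Icc 0 1) (hGε : ∀ y, 1 - ε ≤ G y)
    (hZ : 0 < ∫ y, G y ∂μ) (hf : AEStronglyMeasurable f μ) (hosc : ∀ y z, |f y - f z| ≤ 1) :
    |(∫ y, f y * G y ∂μ) / (∫ y, G y ∂μ) - ∫ y, f y ∂μ| ≤ ε := by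
  set Z := ∫ y, G y ∂μ
  have hGi := integrable_of_forall_mem_Icc hG hG01
  have hZ1 : Z ≤ 1 := by
    simpa using integral_mono hGi (integrable_const 1) fun y => (hG01 y).2
  have hdensity : ∀ y, 1 - ε ≤ G y / Z := fun y =>
    (hGε y).trans (le_div_self (hG01 y).1 hZ hZ1)
  have hmass : ∫ y, G y / Z ∂μ = 1 := by rw [integral_div, div_self hZ.ne']
  simpa only [← integral_div, mul_div_assoc] using
    abs_integral_mul_sub_integral_le hf hosc (hGi.div_const Z) hmass hdensity

end DensityPerturbation

lemma exp_neg_div_mem_Icc {u m : ℝ} (hu : 0 ≤ u) (hm : 0 ≤ m) :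
    Real.exp (-u / m) ∈ Set.Icc (1 - u / m) 1 := by
  rw [neg_div]
  exact ⟨Real.one_sub_le_exp_neg _, Real.exp_le_one_iff.2 (neg_nonpos.2 (div_nonneg hu hm))⟩

theorem stmt14 {E : Type*} [MeasurableSpace E] (μ : Measure E) [IsProbabilityMeasure μ]
    (U : E → ℝ) (m : ℝ) (hm : 1 ≤ m)
    (hU : Measurable U) (hU0 : ∀ x, 0 ≤ U x)
    (hUbdd : BddAbove (Set.range fun x => |U x|)) :
    ∀ x : E, ∀ f : E → ℝ, Measurable f → (∀ y z, |f y - f z| ≤ 1) →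
      |(Real.exp (-U x / m) * f x
          + (1 - Real.exp (-U x / m)) *
            ((∫ y, f y * Real.exp (-U y / m) ∂μ) / (∫ y, Real.exp (-U y / m) ∂μ)))
        - (Real.exp (-U x / m) * f x
          + (1 - Real.exp (-U x / m)) * (∫ y, f y ∂μ))|
      ≤ (⨆ y, |U y|) ^ 2 / m ^ 2 := by
  intro x f hf hosc
  have hm0 : 0 < m := one_pos.trans_le hm
  set c := ⨆ y, |U y|
  have hUc : ∀ y, U y / m ≤ c / m := fun y =>
    div_le_div_of_nonneg_right ((le_abs_self _).trans (le_ciSup hUbdd y)) hm0.le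
  have hc : 0 ≤ c / m := div_nonneg ((abs_nonneg _).trans (le_ciSup hUbdd x)) hm0.le
  have hweight : ∀ y, Real.exp (-U y / m) ∈ Set.Icc (1 - U y / m) 1 := fun y =>
    exp_neg_div_mem_Icc (hU0 y) hm0.le
  have hG01 : ∀ y, Real.exp (-U y / m) ∈ Set.Icc 0 1 := fun y =>
    ⟨(Real.exp_pos _).le, (hweight y).2⟩
  have hG : Measurable fun y => Real.exp (-U y / m) := by fun_prop
  have hZ : 0 < ∫ y, Real.exp (-U y / m) ∂μ :=
    integral_exp_pos (integrable_of_forall_mem_Icc hG.aestronglyMeasurable hG01)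
  have hΨ := abs_integral_mul_div_integral_sub_integral_le hG.aestronglyMeasurable hG01
    (fun y => (sub_le_sub_left (hUc y) 1).trans (hweight y).1) hZ hf.aestronglyMeasurable hosc
  have hx0 : 0 ≤ 1 - Real.exp (-U x / m) := sub_nonneg.2 (hweight x).2
  have hx : 1 - Real.exp (-U x / m) ≤ c / m := by linarith [(hweight x).1, hUc x]
  calc _ = |(1 - Real.exp (-U x / m)) * ((∫ y, f y * Real.exp (-U y / m) ∂μ) /
          (∫ y, Real.exp (-U y / m) ∂μ) - ∫ y, f y ∂μ)| := by ring_nf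
    _ ≤ c / m * (c / m) := by
      rw [abs_mul, abs_of_nonneg hx0]
      exact mul_le_mul hx hΨ (abs_nonneg _) hc
    _ = c ^ 2 / m ^ 2 := by ring
end

section
/- Let μ be a probability measure on E and V : E → ℝ bounded measurable, m ≥ 1. For x ∈ E, define a(x) = μ((e^{V/m} - e^{V(x)/m})₊)/μ(e^{V/m}). Then 0 ≤ a(x) ≤ 1 for all x. Moreover, the kernel S(x,dy) = (1 - a(x))·δ_x(dy) + a(x)·Ψ_{(e^{V/m} - e^{V(x)/m})₊}(μ)(dy) (interpreting the second term as 0 when a(x) = 0) satisfies μS = Ψ_{e^{V/m}}(μ). -/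
/-!
Write `c = exp (V / m)`, `Z = μ c` and `g x = μ ((c - c x)₊)`. Since `c` is nonnegative,
`(c - c x)₊ ≤ c`, so `0 ≤ g x ≤ Z`. For the invariance, integrate `S f` against `μ`: the
jump part contributes `∫∫ f y (c y - c x)₊ μ(dx) μ(dy)`, and the identity
`(c y - c x)₊ = (c x - c y)₊ + c y - c x` turns the inner integral into `g y + c y - Z`.
The `g`-terms then cancel against the holding part `(1 - g x / Z) f x`, leaving `μ (f c) / Z`.
-/

open MeasureTheory

section

variable {E : Type*} [MeasurableSpace E] {μ : Measure E} {c f g : E → ℝ} {C D : ℝ}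

lemma integrable_exp_div_of_abs_le [IsFiniteMeasure μ] {V : E → ℝ} (hV : Measurable V)
    (hVb : ∀ x, |V x| ≤ C) (m : ℝ) : Integrable (fun x => Real.exp (V x / m)) μ := by
  refine .of_bound (hV.div_const m).exp.aestronglyMeasurable (Real.exp (C / |m|))
    (ae_of_all _ fun x => ?_)
  rw [Real.norm_eq_abs, Real.abs_exp, Real.exp_le_exp]
  refine (le_abs_self _).trans ?_
  rw [abs_div]
  gcongr
  exact hVb x

lemma integral_mul_eq_zero_of_integral_eq_zero (hg0 : 0 ≤ g) (hg : Integrable g μ)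
    (h : ∫ x, g x ∂μ = 0) : ∫ x, f x * g x ∂μ = 0 := by
  refine integral_eq_zero_of_ae ?_
  filter_upwards [(integral_eq_zero_iff_of_nonneg hg0 hg).1 h] with x hx
  simp [hx]

lemma integral_max_sub_le_integral [IsFiniteMeasure μ] (hc : Integrable c μ) (hc0 : 0 ≤ c)
    (x : E) :
    ∫ y, max (c y - c x) 0 ∂μ ≤ ∫ y, c y ∂μ :=
  integral_mono (hc.sub (integrable_const _)).pos_part hc
    fun y => max_le (sub_le_self _ (hc0 x)) (hc0 y)

section Probability

variable [IsProbabilityMeasure μ]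

lemma integrable_max_sub_prod (hc : Integrable c μ) :
    Integrable (fun p : E × E => max (c p.2 - c p.1) 0) (μ.prod μ) :=
  ((hc.comp_snd μ).sub (hc.comp_fst μ)).pos_part

lemma integrable_mul_max_sub_prod (hc : Integrable c μ) (hf : Measurable f)
    (hfb : ∀ x, |f x| ≤ D) :
    Integrable (fun p : E × E => f p.2 * max (c p.2 - c p.1) 0) (μ.prod μ) :=
  (integrable_max_sub_prod hc).bdd_mul
    (hf.comp measurable_snd).aestronglyMeasurable (ae_of_all _ fun p => hfb p.2)

lemma integral_max_sub_left (hc : Integrable c μ) (z : E) :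
    ∫ x, max (c z - c x) 0 ∂μ = ∫ x, max (c x - c z) 0 ∂μ + (c z - ∫ x, c x ∂μ) := by
  have hsplit : ∀ x, max (c z - c x) 0 = max (c x - c z) 0 + (c z - c x) := fun x => by
    have h := max_zero_sub_max_neg_zero_eq_self (c z - c x)
    rw [neg_sub] at h
    linarith
  have hneg : Integrable (fun x => max (c x - c z) 0) μ := (hc.sub (integrable_const _)).pos_part
  have hdiff : Integrable (fun x => c z - c x) μ := (integrable_const _).sub hc
  simp_rw [hsplit]
  rw [integral_add hneg hdiff, integral_sub (integrable_const _) hc, integral_const,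
    probReal_univ, one_smul]

lemma integral_integral_mul_max_sub (hc : Integrable c μ) (hf : Measurable f)
    (hfb : ∀ x, |f x| ≤ D) :
    ∫ x, ∫ y, f y * max (c y - c x) 0 ∂μ ∂μ
      = ∫ y, f y * ∫ x, max (c x - c y) 0 ∂μ ∂μ + ∫ y, f y * c y ∂μ
        - (∫ y, c y ∂μ) * ∫ y, f y ∂μ := by
  have hfb' : ∀ᵐ x ∂μ, ‖f x‖ ≤ D := ae_of_all _ hfb
  have hg : Integrable (fun y => ∫ x, max (c x - c y) 0 ∂μ) μ :=
    (integrable_max_sub_prod hc).swap.integral_prod_right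
  have hf_int : Integrable f μ := .of_bound hf.aestronglyMeasurable D hfb'
  have hfg := hg.bdd_mul hf.aestronglyMeasurable hfb'
  have hfc := hc.bdd_mul hf.aestronglyMeasurable hfb'
  have hfZ : Integrable (fun y => f y * ∫ x, c x ∂μ) μ := hf_int.mul_const _
  have hfcZ : Integrable (fun y => f y * c y - f y * ∫ x, c x ∂μ) μ := hfc.sub hfZ
  rw [integral_integral_swap (integrable_mul_max_sub_prod hc hf hfb)]
  simp_rw [integral_const_mul, integral_max_sub_left hc, mul_add, mul_sub]
  rw [integral_add hfg hfcZ, integral_sub hfc hfZ, integral_mul_const]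
  ring

theorem integral_mixture_eq (hc : Integrable c μ) (hZ : ∫ y, c y ∂μ ≠ 0) (hf : Measurable f)
    (hfb : ∀ x, |f x| ≤ D) :
    ∫ x, ((1 - (∫ y, max (c y - c x) 0 ∂μ) / ∫ y, c y ∂μ) * f x
        + (∫ y, max (c y - c x) 0 ∂μ) / (∫ y, c y ∂μ)
          * ((∫ y, f y * max (c y - c x) 0 ∂μ) / ∫ y, max (c y - c x) 0 ∂μ)) ∂μ
      = (∫ y, f y * c y ∂μ) / ∫ y, c y ∂μ := by
  set Z := ∫ y, c y ∂μ
  set G := fun x => ∫ y, max (c y - c x) 0 ∂μ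
  set H := fun x => ∫ y, f y * max (c y - c x) 0 ∂μ
  have hfb' : ∀ᵐ x ∂μ, ‖f x‖ ≤ D := ae_of_all _ hfb
  have hG : Integrable G μ := (integrable_max_sub_prod hc).integral_prod_left
  have hH : Integrable H μ := (integrable_mul_max_sub_prod hc hf hfb).integral_prod_left
  have hf_int : Integrable f μ := .of_bound hf.aestronglyMeasurable D hfb'
  have hfG := hG.bdd_mul hf.aestronglyMeasurable hfb'
  -- if `G x = 0` then `(c - c x)₊ = 0` a.e., so `H x = 0` as the right side needs
  have hpoint : ∀ x, (1 - G x / Z) * f x + G x / Z * (H x / G x)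
      = f x - f x * G x / Z + H x / Z := fun x => by
    by_cases h0 : G x = 0
    · have hH0 : H x = 0 := integral_mul_eq_zero_of_integral_eq_zero
        (fun y => le_max_right _ _) (hc.sub (integrable_const _)).pos_part h0
      simp [h0, hH0]
    · field_simp
  show ∫ x, ((1 - G x / Z) * f x + G x / Z * (H x / G x)) ∂μ = _
  have hholding : Integrable (fun x => f x - f x * G x / Z) μ := hf_int.sub (hfG.div_const Z)
  simp_rw [hpoint]
  rw [integral_add hholding (hH.div_const Z),
    integral_sub hf_int (hfG.div_const Z), integral_div, integral_div,
    integral_integral_mul_max_sub hc hf hfb]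
  field_simp
  ring

end Probability

end

theorem stmt16_general {E : Type*} [MeasurableSpace E] (μ : Measure E) [IsProbabilityMeasure μ]
    (V : E → ℝ) (m : ℝ)
    (hV : Measurable V) (hVb : ∃ C, ∀ x, |V x| ≤ C) :
    (∀ x : E,
        0 ≤ (∫ y, max (Real.exp (V y / m) - Real.exp (V x / m)) 0 ∂μ) /
              (∫ y, Real.exp (V y / m) ∂μ) ∧
        (∫ y, max (Real.exp (V y / m) - Real.exp (V x / m)) 0 ∂μ) /
              (∫ y, Real.exp (V y / m) ∂μ) ≤ 1) ∧
    (∀ f : E → ℝ, Measurable f → (∃ C, ∀ x, |f x| ≤ C) →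
      ∫ x, ((1 - (∫ y, max (Real.exp (V y / m) - Real.exp (V x / m)) 0 ∂μ) /
                    (∫ y, Real.exp (V y / m) ∂μ)) * f x
          + ((∫ y, max (Real.exp (V y / m) - Real.exp (V x / m)) 0 ∂μ) /
                (∫ y, Real.exp (V y / m) ∂μ)) *
            ((∫ y, f y * max (Real.exp (V y / m) - Real.exp (V x / m)) 0 ∂μ) /
              (∫ y, max (Real.exp (V y / m) - Real.exp (V x / m)) 0 ∂μ))) ∂μ
        = (∫ y, f y * Real.exp (V y / m) ∂μ) / (∫ y, Real.exp (V y / m) ∂μ)) := by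
  obtain ⟨C, hC⟩ := hVb
  have hc := integrable_exp_div_of_abs_le (μ := μ) hV hC m
  have hZ : 0 < ∫ y, Real.exp (V y / m) ∂μ := integral_exp_pos hc
  refine ⟨fun x => ⟨?_, ?_⟩, fun f hf ⟨D, hD⟩ => integral_mixture_eq hc hZ.ne' hf hD⟩
  · exact div_nonneg (integral_nonneg fun y => le_max_right _ _) hZ.le
  · exact (div_le_one hZ).2 (integral_max_sub_le_integral hc (fun y => (Real.exp_pos _).le) x)

theorem stmt16 {E : Type*} [MeasurableSpace E] (μ : Measure E) [IsProbabilityMeasure μ]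
    (V : E → ℝ) (m : ℝ) (hm : 1 ≤ m)
    (hV : Measurable V) (hVb : ∃ C, ∀ x, |V x| ≤ C) :
    (∀ x : E,
        0 ≤ (∫ y, max (Real.exp (V y / m) - Real.exp (V x / m)) 0 ∂μ) /
              (∫ y, Real.exp (V y / m) ∂μ) ∧
        (∫ y, max (Real.exp (V y / m) - Real.exp (V x / m)) 0 ∂μ) /
              (∫ y, Real.exp (V y / m) ∂μ) ≤ 1) ∧
    (∀ f : E → ℝ, Measurable f → (∃ C, ∀ x, |f x| ≤ C) →
      ∫ x, ((1 - (∫ y, max (Real.exp (V y / m) - Real.exp (V x / m)) 0 ∂μ) /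
                    (∫ y, Real.exp (V y / m) ∂μ)) * f x
          + ((∫ y, max (Real.exp (V y / m) - Real.exp (V x / m)) 0 ∂μ) /
                (∫ y, Real.exp (V y / m) ∂μ)) *
            ((∫ y, f y * max (Real.exp (V y / m) - Real.exp (V x / m)) 0 ∂μ) /
              (∫ y, max (Real.exp (V y / m) - Real.exp (V x / m)) 0 ∂μ))) ∂μ
        = (∫ y, f y * Real.exp (V y / m) ∂μ) / (∫ y, Real.exp (V y / m) ∂μ)) :=
  stmt16_general μ V m hV hVb
end
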